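/- Suppose Z ∉ span(X) and W ∉ span(X, Z), and write blp(W|Z, X) = B*Z + C*Xᵀ for the least-squares regression of W on (X, Z). Then the Z-coefficients b̂ (from the regression of Y on (X,Z)) and β̂ (from the regression of Y on (X,Z,W)) satisfy b̂ − β̂ = B* · δ̂, where δ̂ is the W-coefficient in the regression of Y on (X,Z,W). Moreover B* = σ_{wz·x}/σ²_{z·x} and, provided σ_{y·zx} > 0 and σ_{w·zx} > 0, δ̂ = σ_{yw·zx}/σ²_{w·zx} = ρ_{yw·zx} · σ_{y·zx}/σ_{w·zx}. -/

import Mathlib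

/-!
Pairing with the residual `e = Z - blp(Z|X)`, which is orthogonal to `span X`, reads off the
`Z`-coefficient of any vector of `span (X, Z)`: `(V, e) = b (e, e)` when `V - b Z ∈ span X`.
Pairing `Y` with `e` through its projections on `(X, Z)` and on `(X, Z, W)` gives
`b̂ (e, e) = β̂ (e, e) + δ̂ (W, e)`, and `(W, e) = B* (e, e)`. The same argument one level up, with
the residual `W - blp(W|X,Z)`, identifies `δ̂`.
-/

/-- Weighted inner product on ℝⁿ: `(A,B) := (∑ i, wᵢ Aᵢ Bᵢ) / (∑ i, wᵢ)`. -/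
noncomputable def wip {n : ℕ} (w A B : Fin n → ℝ) : ℝ :=
  (∑ i, w i * A i * B i) / (∑ i, w i)

/-- `P` is the best linear predictor (orthogonal projection with respect to the
weighted inner product `wip w`) of `A` onto the span of the collection `C`. -/
def IsBlp {n : ℕ} (w : Fin n → ℝ) (C : Set (Fin n → ℝ)) (A P : Fin n → ℝ) : Prop :=
  P ∈ Submodule.span ℝ C ∧ ∀ v ∈ Submodule.span ℝ C, wip w (A - P) v = 0

open Submodule

section

variable {n : ℕ} {w : Fin n → ℝ}

lemma wip_comm (A B : Fin n → ℝ) : wip w A B = wip w B A := by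
  unfold wip
  congr 1
  exact Finset.sum_congr rfl fun i _ => mul_right_comm _ _ _

lemma wip_sub_left (A B C : Fin n → ℝ) : wip w (A - B) C = wip w A C - wip w B C := by
  simp only [wip, Pi.sub_apply, mul_sub, sub_mul, Finset.sum_sub_distrib, sub_div]

lemma wip_smul_left (c : ℝ) (A B : Fin n → ℝ) : wip w (c • A) B = c * wip w A B := by
  simp only [wip, Pi.smul_apply, smul_eq_mul, ← mul_div_assoc, Finset.mul_sum]
  congr 1
  exact Finset.sum_congr rfl fun i _ => by ring

lemma wip_self_pos (hw : ∀ i, 0 < w i) {v : Fin n → ℝ} (hv : v ≠ 0) : 0 < wip w v v := by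
  obtain ⟨i, hi⟩ := Function.ne_iff.mp hv
  refine div_pos (Finset.sum_pos' (fun j _ => ?_) ⟨i, Finset.mem_univ i, ?_⟩)
    (Finset.sum_pos (fun j _ => hw j) ⟨i, Finset.mem_univ i⟩)
  · rw [mul_assoc]
    exact mul_nonneg (hw j).le (mul_self_nonneg _)
  · rw [mul_assoc]
    exact mul_pos (hw i) (mul_self_pos.mpr hi)

namespace IsBlp

variable {C : Set (Fin n → ℝ)} {A P V Q : Fin n → ℝ}

lemma wip_eq (h : IsBlp w C A P) {v : Fin n → ℝ} (hv : v ∈ span ℝ C) :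
    wip w A v = wip w P v := by
  have horth := h.2 v hv
  rwa [wip_sub_left, sub_eq_zero] at horth

lemma wip_residual_eq_zero (h : IsBlp w C A P) {v : Fin n → ℝ} (hv : v ∈ span ℝ C) :
    wip w v (A - P) = 0 := by
  rw [wip_comm]
  exact h.2 v hv

lemma wip_self_residual (h : IsBlp w C A P) : wip w A (A - P) = wip w (A - P) (A - P) := by
  rw [wip_sub_left (w := w) A P (A - P), h.wip_residual_eq_zero h.1, sub_zero]

lemma sub_mem_span_insert (h : IsBlp w C A P) : A - P ∈ span ℝ (insert A C) :=
  sub_mem (subset_span (Set.mem_insert A C)) (span_mono (Set.subset_insert A C) h.1)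

lemma residual_pos (hw : ∀ i, 0 < w i) (h : IsBlp w C A P) (hA : A ∉ span ℝ C) :
    0 < wip w (A - P) (A - P) :=
  wip_self_pos hw (sub_ne_zero.mpr fun hAP => hA (hAP ▸ h.1))

lemma wip_residual_of_sub_smul_mem (h : IsBlp w C A P) {b : ℝ} (hV : V - b • A ∈ span ℝ C) :
    wip w V (A - P) = b * wip w (A - P) (A - P) := by
  have horth := h.wip_residual_eq_zero hV
  rw [wip_sub_left, wip_smul_left, h.wip_self_residual] at horth
  linarith

lemma wip_residual_of_insert (h : IsBlp w C A P) (hQ : IsBlp w (insert A C) V Q) {b : ℝ}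
    (hQb : Q - b • A ∈ span ℝ C) : wip w V (A - P) = b * wip w (A - P) (A - P) := by
  rw [hQ.wip_eq h.sub_mem_span_insert, h.wip_residual_of_sub_smul_mem hQb]

end IsBlp

end

lemma div_sqrt_mul_sqrt_mul_div_sqrt {p q : ℝ} (hp : 0 < p) (hq : 0 ≤ q) (c : ℝ) :
    c / (Real.sqrt p * Real.sqrt q) * Real.sqrt p / Real.sqrt q = c / q := by
  have hsp : Real.sqrt p ≠ 0 := (Real.sqrt_pos.mpr hp).ne'
  rw [div_mul_eq_mul_div, mul_comm (Real.sqrt p), mul_div_mul_right _ _ hsp, div_div,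
    Real.mul_self_sqrt hq]

theorem stmt3_general {n : ℕ} (w : Fin n → ℝ) (hw : ∀ i, 0 < w i)
    (X : Set (Fin n → ℝ))
    (Y Z W : Fin n → ℝ)
    (hZ : Z ∉ Submodule.span ℝ X)
    (Pzx Pwx Pyzx Pwzx Pyzxw : Fin n → ℝ)
    (hPzx : IsBlp w X Z Pzx)
    (hPwx : IsBlp w X W Pwx)
    (hPyzx : IsBlp w (insert Z X) Y Pyzx)
    (hPwzx : IsBlp w (insert Z X) W Pwzx)
    (hPyzxw : IsBlp w (insert Z (insert W X)) Y Pyzxw)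
    (Bstar bhat betahat deltahat : ℝ)
    (hBstar : Pwzx - Bstar • Z ∈ Submodule.span ℝ X)
    (hb : Pyzx - bhat • Z ∈ Submodule.span ℝ X)
    (hbeta : Pyzxw - betahat • Z - deltahat • W ∈ Submodule.span ℝ X) :
    bhat - betahat = Bstar * deltahat ∧
    Bstar = wip w (W - Pwx) (Z - Pzx) / wip w (Z - Pzx) (Z - Pzx) ∧
    (0 < wip w (Y - Pyzx) (Y - Pyzx) → 0 < wip w (W - Pwzx) (W - Pwzx) →
      deltahat = wip w (Y - Pyzx) (W - Pwzx) / wip w (W - Pwzx) (W - Pwzx) ∧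
      deltahat =
        (wip w (Y - Pyzx) (W - Pwzx) /
            (Real.sqrt (wip w (Y - Pyzx) (Y - Pyzx)) *
              Real.sqrt (wip w (W - Pwzx) (W - Pwzx)))) *
          Real.sqrt (wip w (Y - Pyzx) (Y - Pyzx)) /
          Real.sqrt (wip w (W - Pwzx) (W - Pwzx))) := by
  have hspanZ : span ℝ (insert Z X) ≤ span ℝ (insert Z (insert W X)) :=
    span_mono (Set.insert_subset_insert (Set.subset_insert W X))
  have hs := hPzx.residual_pos hw hZ
  have hWe := hPzx.wip_residual_of_insert hPwzx hBstar
  have hYe := hPzx.wip_residual_of_insert hPyzx hb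
  have hYe' : wip w Y (Z - Pzx) =
      betahat * wip w (Z - Pzx) (Z - Pzx) + deltahat * wip w W (Z - Pzx) := by
    have hcoef := hPzx.wip_residual_of_sub_smul_mem (V := Pyzxw - deltahat • W)
      (by rwa [sub_right_comm])
    rw [wip_sub_left, wip_smul_left] at hcoef
    rw [hPyzxw.wip_eq (hspanZ hPzx.sub_mem_span_insert)]
    linarith
  have hYf : wip w Y (W - Pwzx) = deltahat * wip w (W - Pwzx) (W - Pwzx) := by
    refine hPwzx.wip_residual_of_insert (by rwa [Set.insert_comm]) ?_
    have hmem := add_mem (span_mono (Set.subset_insert Z X) hbeta)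
      (smul_mem _ betahat (subset_span (Set.mem_insert Z X)))
    rwa [sub_right_comm, sub_add_cancel] at hmem
  have hcov : wip w (Y - Pyzx) (W - Pwzx) = deltahat * wip w (W - Pwzx) (W - Pwzx) := by
    rw [wip_sub_left, hPwzx.wip_residual_eq_zero hPyzx.1, sub_zero, hYf]
  refine ⟨?_, ?_, fun hp hq => ⟨?_, ?_⟩⟩
  · exact mul_right_cancel₀ hs.ne' (by linear_combination hYe' - hYe + deltahat * hWe)
  · rw [wip_sub_left, hPzx.wip_residual_eq_zero hPwx.1, sub_zero, hWe,
      mul_div_cancel_right₀ _ hs.ne']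
  · rw [hcov, mul_div_cancel_right₀ _ hq.ne']
  · rw [div_sqrt_mul_sqrt_mul_div_sqrt hp hq.le, hcov, mul_div_cancel_right₀ _ hq.ne']

/-- if `Z ∉ span(X)` and `W ∉ span(X,Z)`, and
`blp(W|Z,X) = B*Z + C*Xᵀ`, then `b̂ − β̂ = B* · δ̂`; moreover
`B* = σ_{wz·x}/σ²_{z·x}` and, provided `σ_{y·zx} > 0` and `σ_{w·zx} > 0`,
`δ̂ = σ_{yw·zx}/σ²_{w·zx} = ρ_{yw·zx} · σ_{y·zx}/σ_{w·zx}`. -/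
theorem stmt3 {n : ℕ} (w : Fin n → ℝ) (hw : ∀ i, 0 < w i)
    (X : Set (Fin n → ℝ)) (hXfin : X.Finite)
    (h1 : (fun _ => (1 : ℝ)) ∈ Submodule.span ℝ X)
    (Y Z W : Fin n → ℝ)
    (hZ : Z ∉ Submodule.span ℝ X)
    (hW : W ∉ Submodule.span ℝ (insert Z X))
    (Pzx Pwx Pyzx Pwzx Pyzxw : Fin n → ℝ)
    (hPzx : IsBlp w X Z Pzx)
    (hPwx : IsBlp w X W Pwx)
    (hPyzx : IsBlp w (insert Z X) Y Pyzx)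
    (hPwzx : IsBlp w (insert Z X) W Pwzx)
    (hPyzxw : IsBlp w (insert Z (insert W X)) Y Pyzxw)
    (Bstar bhat betahat deltahat : ℝ)
    (hBstar : Pwzx - Bstar • Z ∈ Submodule.span ℝ X)
    (hb : Pyzx - bhat • Z ∈ Submodule.span ℝ X)
    (hbeta : Pyzxw - betahat • Z - deltahat • W ∈ Submodule.span ℝ X) :
    bhat - betahat = Bstar * deltahat ∧
    Bstar = wip w (W - Pwx) (Z - Pzx) / wip w (Z - Pzx) (Z - Pzx) ∧
    (0 < wip w (Y - Pyzx) (Y - Pyzx) → 0 < wip w (W - Pwzx) (W - Pwzx) →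
      deltahat = wip w (Y - Pyzx) (W - Pwzx) / wip w (W - Pwzx) (W - Pwzx) ∧
      deltahat =
        (wip w (Y - Pyzx) (W - Pwzx) /
            (Real.sqrt (wip w (Y - Pyzx) (Y - Pyzx)) *
              Real.sqrt (wip w (W - Pwzx) (W - Pwzx)))) *
          Real.sqrt (wip w (Y - Pyzx) (Y - Pyzx)) /
          Real.sqrt (wip w (W - Pwzx) (W - Pwzx))) :=
  stmt3_general w hw X Y Z W hZ Pzx Pwx Pyzx Pwzx Pyzxw hPzx hPwx hPyzx hPwzx hPyzxw Bstar bhat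
    betahat deltahat hBstar hb hbeta
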